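/- Let n = 2 and let A, J be real 2 × 3 matrices whose rows a_μ, j_μ ∈ ℝ³ satisfy the constant SU(2) Yang–Mills system ∑_{μ=1}^2 a_μ × (a_μ × a_ν) = j_ν for ν = 1, 2. Then there exist Q ∈ O(2) and P ∈ SO(3) such that QAP is diagonal (i.e. (QAP)_{νk} = 0 whenever ν ≠ k). Moreover, for all such Q and P the matrix QJP is also diagonal, and the diagonal entries a_k = (QAP)_{kk}, j_k = (QJP)_{kk}, k = 1, 2, satisfy −a₁a₂² = j₁ and −a₂a₁² = j₂. -/

import Mathlib

/-!
By the BAC–CAB rule `a × (a × b) = (a ⬝ b) a - (a ⬝ a) b`, the Yang–Mills system says exactly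
`J = A Aᵀ A - tr (A Aᵀ) A`. The right-hand side is equivariant under `A ↦ Q A P` for orthogonal
`Q` and `P`, so `Q J P` is obtained by applying the same cubic map to `Q A P`; for a diagonal
argument that map is computed entrywise. A diagonalizing pair exists: the spectral theorem for
`A Aᵀ` gives `Q` making the rows of `Q A` orthogonal, and the normalized rows, completed by their
cross product, form the columns of a rotation `P`.
-/

open Matrix

def IsRectDiagonal {R : Type*} [Zero R] {m n : ℕ} (M : Matrix (Fin m) (Fin n) R) : Prop :=
  ∀ (i : Fin m) (j : Fin n), (i : ℕ) ≠ (j : ℕ) → M i j = 0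

theorem isRectDiagonal_iff_exists {R : Type*} [Zero R] {D : Matrix (Fin 2) (Fin 3) R} :
    IsRectDiagonal D ↔ ∃ a b, D = !![a, 0, 0; 0, b, 0] := by
  constructor
  · intro hD
    refine ⟨D 0 0, D 1 1, ?_⟩
    ext i j
    fin_cases i <;> fin_cases j <;> first | rfl | exact hD _ _ (by decide)
  · rintro ⟨a, b, rfl⟩ i j hij
    fin_cases i <;> fin_cases j <;> first | rfl | exact (hij rfl).elim

section YangMills

variable {R ι κ : Type*} [CommRing R] [Fintype ι] [Fintype κ]

def ymCurrent (A : Matrix ι κ R) : Matrix ι κ R :=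
  A * Aᵀ * A - trace (A * Aᵀ) • A

theorem sum_cross_cross_eq_ymCurrent (A : Matrix ι (Fin 3) R) (ν : ι) :
    ∑ μ, A μ ⨯₃ (A μ ⨯₃ A ν) = ymCurrent A ν := by
  ext k
  simp [ymCurrent, cross_cross_eq_smul_sub_smul', trace, mul_apply, Finset.sum_apply,
    Finset.sum_sub_distrib, dotProduct, Finset.mul_sum, mul_comm, mul_left_comm]

theorem ymCurrent_mul_mul {ι' κ' : Type*} [Fintype ι'] [Fintype κ'] [DecidableEq ι]
    [DecidableEq κ] {Q : Matrix ι' ι R} {P : Matrix κ κ' R} (hQ : Qᵀ * Q = 1) (hP : P * Pᵀ = 1)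
    (A : Matrix ι κ R) : ymCurrent (Q * A * P) = Q * ymCurrent A * P := by
  have hgram : Q * A * P * (Q * A * P)ᵀ = Q * (A * Aᵀ) * Qᵀ := by
    simp only [transpose_mul, Matrix.mul_assoc]
    rw [← Matrix.mul_assoc P, hP, Matrix.one_mul]
  have htrace : trace (Q * (A * Aᵀ) * Qᵀ) = trace (A * Aᵀ) := by
    rw [trace_mul_comm, ← Matrix.mul_assoc, hQ, Matrix.one_mul]
  rw [ymCurrent, ymCurrent, hgram, htrace]
  simp only [Matrix.mul_sub, Matrix.sub_mul, Matrix.mul_smul, Matrix.smul_mul, Matrix.mul_assoc]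
  rw [← Matrix.mul_assoc Qᵀ, hQ, Matrix.one_mul]

theorem ymCurrent_diag (a b : R) :
    ymCurrent !![a, 0, 0; 0, b, 0] = !![-(a * b ^ 2), 0, 0; 0, -(b * a ^ 2), 0] := by
  ext i j
  fin_cases i <;> fin_cases j <;>
    simp [ymCurrent, trace, mul_apply, Fin.sum_univ_succ, -cons_mul] <;> ring

end YangMills

theorem exists_mem_orthogonalGroup_hasOrthogonalRows_mul {m n : Type*} [Fintype m]
    [DecidableEq m] [Fintype n] (A : Matrix m n ℝ) :
    ∃ Q ∈ orthogonalGroup m ℝ, (Q * A).HasOrthogonalRows := by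
  have hS : (A * Aᵀ).IsHermitian := by
    simpa [conjTranspose_eq_transpose_of_trivial] using isHermitian_mul_conjTranspose_self A
  set U : Matrix m m ℝ := ↑hS.eigenvectorUnitary
  have hU : star U = Uᵀ := by rw [star_eq_conjTranspose, conjTranspose_eq_transpose_of_trivial]
  have hdiag : star U * (A * Aᵀ) * U = diagonal hS.eigenvalues := by
    simpa using hS.conjStarAlgAut_star_eigenvectorUnitary
  rw [hU] at hdiag
  refine ⟨Uᵀ, ?_, ?_⟩
  · rw [mem_orthogonalGroup_iff, transpose_transpose, ← hU]
    exact Unitary.coe_star_mul_self _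
  · rw [← mul_transpose_self_isDiag_iff_hasOrthogonalRows, transpose_mul, transpose_transpose,
      Matrix.mul_assoc, ← Matrix.mul_assoc A, ← Matrix.mul_assoc, hdiag]
    exact isDiag_diagonal _

section Normalize

variable {ι : Type*} [Fintype ι]

theorem exists_smul_dotProduct_self_eq_one {u : ι → ℝ} (hu : u ≠ 0) :
    ∃ t : ℝ, (t • u) ⬝ᵥ (t • u) = 1 := by
  have hpos : 0 < u ⬝ᵥ u :=
    lt_of_le_of_ne (Fintype.sum_nonneg fun i => mul_self_nonneg (u i))
      (by simpa [eq_comm] using hu)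
  refine ⟨(√(u ⬝ᵥ u))⁻¹, ?_⟩
  rw [smul_dotProduct, dotProduct_smul, smul_smul, smul_eq_mul, ← sq, inv_pow,
    Real.sq_sqrt hpos.le, inv_mul_cancel₀ hpos.ne']

theorem exists_unit_parallel_of_dotProduct_eq_zero [Nontrivial ι] {u w : ι → ℝ}
    (h : u ⬝ᵥ w = 0) : ∃ r, r ⬝ᵥ r = 1 ∧ r ⬝ᵥ w = 0 ∧ ∃ t : ℝ, u = t • r := by
  by_cases hu : u = 0
  · obtain ⟨s, hs, hsw⟩ := exists_ne_zero_dotProduct_eq_zero w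
    obtain ⟨t, ht⟩ := exists_smul_dotProduct_self_eq_one hs
    exact ⟨t • s, ht, by rw [smul_dotProduct, hsw, smul_zero], 0, by rw [hu, zero_smul]⟩
  · obtain ⟨t, ht⟩ := exists_smul_dotProduct_self_eq_one hu
    have ht0 : t ≠ 0 := by rintro rfl; simp at ht
    exact ⟨t • u, ht, by rw [smul_dotProduct, h, smul_zero], t⁻¹,
      by rw [smul_smul, inv_mul_cancel₀ ht0, one_smul]⟩

end Normalize

section Frame

variable {R : Type*} [CommRing R] {r₀ r₁ : Fin 3 → R}

theorem cross_dotProduct_cross_eq_one (h₀ : r₀ ⬝ᵥ r₀ = 1) (h₁ : r₁ ⬝ᵥ r₁ = 1)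
    (h₀₁ : r₀ ⬝ᵥ r₁ = 0) : (r₀ ⨯₃ r₁) ⬝ᵥ (r₀ ⨯₃ r₁) = 1 := by
  rw [cross_dot_cross, h₀, h₁, h₀₁, dotProduct_comm, h₀₁, mul_one, mul_zero, sub_zero]

theorem of_cross_mul_transpose_eq_one (h₀ : r₀ ⬝ᵥ r₀ = 1) (h₁ : r₁ ⬝ᵥ r₁ = 1)
    (h₀₁ : r₀ ⬝ᵥ r₁ = 0) : of ![r₀, r₁, r₀ ⨯₃ r₁] * (of ![r₀, r₁, r₀ ⨯₃ r₁])ᵀ = 1 := by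
  have hcross := cross_dotProduct_cross_eq_one h₀ h₁ h₀₁
  have hcross₀ : (r₀ ⨯₃ r₁) ⬝ᵥ r₀ = 0 := by rw [dotProduct_comm, dot_self_cross]
  have hcross₁ : (r₀ ⨯₃ r₁) ⬝ᵥ r₁ = 0 := by rw [dotProduct_comm, dot_cross_self]
  ext i j
  change ![r₀, r₁, r₀ ⨯₃ r₁] i ⬝ᵥ ![r₀, r₁, r₀ ⨯₃ r₁] j = (1 : Matrix (Fin 3) (Fin 3) R) i j
  fin_cases i <;> fin_cases j <;>
    simp [h₀, h₁, h₀₁, hcross, hcross₀, hcross₁, dotProduct_comm r₁ r₀, dot_self_cross,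
      dot_cross_self]

theorem transpose_of_cross_mem_specialOrthogonalGroup (h₀ : r₀ ⬝ᵥ r₀ = 1) (h₁ : r₁ ⬝ᵥ r₁ = 1)
    (h₀₁ : r₀ ⬝ᵥ r₁ = 0) : (of ![r₀, r₁, r₀ ⨯₃ r₁])ᵀ ∈ specialOrthogonalGroup (Fin 3) R := by
  refine mem_specialOrthogonalGroup_iff.mpr ⟨(mem_orthogonalGroup_iff' _ _).mpr ?_, ?_⟩
  · rw [transpose_transpose]
    exact of_cross_mul_transpose_eq_one h₀ h₁ h₀₁
  · rw [det_transpose]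
    change det ![r₀, r₁, r₀ ⨯₃ r₁] = 1
    rw [← triple_product_eq_det, ← triple_product_permutation (r₀ ⨯₃ r₁)]
    exact cross_dotProduct_cross_eq_one h₀ h₁ h₀₁

end Frame

theorem exists_mem_specialOrthogonalGroup_isRectDiagonal_mul {B : Matrix (Fin 2) (Fin 3) ℝ}
    (hB : B.HasOrthogonalRows) :
    ∃ P ∈ specialOrthogonalGroup (Fin 3) ℝ, IsRectDiagonal (B * P) := by
  obtain ⟨r₀, h₀, h₀₁, a, ha⟩ := exists_unit_parallel_of_dotProduct_eq_zero (hB zero_ne_one)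
  obtain ⟨r₁, h₁, h₁₀, b, hb⟩ :=
    exists_unit_parallel_of_dotProduct_eq_zero (by rwa [dotProduct_comm] : B 1 ⬝ᵥ r₀ = 0)
  rw [dotProduct_comm] at h₁₀
  have hBM : B = !![a, 0, 0; 0, b, 0] * of ![r₀, r₁, r₀ ⨯₃ r₁] := by
    ext i k
    fin_cases i <;> simp [ha, hb, mul_apply, Fin.sum_univ_succ]
  refine ⟨_, transpose_of_cross_mem_specialOrthogonalGroup h₀ h₁ h₁₀, ?_⟩
  rw [hBM, Matrix.mul_assoc, of_cross_mul_transpose_eq_one h₀ h₁ h₁₀, Matrix.mul_one]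
  exact isRectDiagonal_iff_exists.mpr ⟨a, b, rfl⟩

theorem exists_isRectDiagonal_mul_mul (A : Matrix (Fin 2) (Fin 3) ℝ) :
    ∃ Q ∈ orthogonalGroup (Fin 2) ℝ, ∃ P ∈ specialOrthogonalGroup (Fin 3) ℝ,
      IsRectDiagonal (Q * A * P) := by
  obtain ⟨Q, hQ, hrows⟩ := exists_mem_orthogonalGroup_hasOrthogonalRows_mul A
  obtain ⟨P, hP, hdiag⟩ := exists_mem_specialOrthogonalGroup_isRectDiagonal_mul hrows
  exact ⟨Q, hQ, P, hP, hdiag⟩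

/-- Theorem 2 of the paper (case `n = 2`): if `A, J` are `2 × 3` real matrices
satisfying the constant SU(2) Yang–Mills system, then there exist `Q ∈ O(2)`
and `P ∈ SO(3)` such that `Q*A*P` is diagonal; and for all such `Q, P`, the
matrix `Q*J*P` is also diagonal and the diagonal entries satisfy
`-a₁a₂² = j₁` and `-a₂a₁² = j₂`. -/
theorem su2_ym_diagonalization_dim_two
    (A J : Matrix (Fin 2) (Fin 3) ℝ)
    (hYM : ∀ ν : Fin 2,
      ∑ μ : Fin 2, crossProduct (A μ) (crossProduct (A μ) (A ν)) = J ν) :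
    (∃ Q ∈ Matrix.orthogonalGroup (Fin 2) ℝ,
      ∃ P ∈ Matrix.specialOrthogonalGroup (Fin 3) ℝ,
        ∀ (ν : Fin 2) (k : Fin 3), (ν : ℕ) ≠ (k : ℕ) → (Q * A * P) ν k = 0) ∧
    (∀ Q ∈ Matrix.orthogonalGroup (Fin 2) ℝ,
      ∀ P ∈ Matrix.specialOrthogonalGroup (Fin 3) ℝ,
        (∀ (ν : Fin 2) (k : Fin 3), (ν : ℕ) ≠ (k : ℕ) → (Q * A * P) ν k = 0) →
        (∀ (ν : Fin 2) (k : Fin 3), (ν : ℕ) ≠ (k : ℕ) → (Q * J * P) ν k = 0) ∧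
        (∀ a j : Fin 2 → ℝ,
          (∀ k : Fin 2, a k = (Q * A * P) k (Fin.castLE (by norm_num) k)) →
          (∀ k : Fin 2, j k = (Q * J * P) k (Fin.castLE (by norm_num) k)) →
          -a 0 * (a 1) ^ 2 = j 0 ∧ -a 1 * (a 0) ^ 2 = j 1)) := by
  have hJ : J = ymCurrent A := by
    ext ν k
    rw [← hYM ν, sum_cross_cross_eq_ymCurrent]
  refine ⟨exists_isRectDiagonal_mul_mul A, fun Q hQ P hP hD => ?_⟩
  obtain ⟨d₀, d₁, hQAP⟩ := isRectDiagonal_iff_exists.mp hD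
  have hQJP : Q * J * P = !![-(d₀ * d₁ ^ 2), 0, 0; 0, -(d₁ * d₀ ^ 2), 0] := by
    rw [hJ, ← ymCurrent_mul_mul ((mem_orthogonalGroup_iff' _ _).mp hQ)
      ((mem_orthogonalGroup_iff _ _).mp hP.1), hQAP, ymCurrent_diag]
  refine ⟨isRectDiagonal_iff_exists.mpr ⟨_, _, hQJP⟩, fun a j ha hj => ?_⟩
  simp [ha 0, ha 1, hj 0, hj 1, hQAP, hQJP]
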